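/- On the subspace E = (ker L)^⊥, the norm ‖(-L)^{1/2} f‖_{L²(ℝ)} is equivalent to the H¹(ℝ) norm, for f in E ∩ H¹(ℝ). -/

import Mathlib

open Real MeasureTheory Set
open scoped ENNReal

-- basic facts
lemma abs_tanh_le_one (x : ℝ) : |Real.tanh x| ≤ 1 := by
  rw [Real.tanh_eq_sinh_div_cosh, abs_div, abs_of_pos (Real.cosh_pos x),
    div_le_one (Real.cosh_pos x), abs_le]
  constructor <;> rw [Real.sinh_eq, Real.cosh_eq] <;>
    nlinarith [Real.exp_pos x, Real.exp_pos (-x)]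

lemma continuous_tanh' : Continuous Real.tanh := by
  have : Real.tanh = fun x => Real.sinh x / Real.cosh x := by
    funext x; exact Real.tanh_eq_sinh_div_cosh x
  rw [this]
  exact Real.continuous_sinh.div Real.continuous_cosh fun x => (Real.cosh_pos x).ne'

lemma one_div_cosh_le (x : ℝ) : 1 / Real.cosh x ≤ 2 * Real.exp (-x) := by
  rw [div_le_iff₀ (Real.cosh_pos x), Real.cosh_eq]
  have h1 : Real.exp (-x) * Real.exp x = 1 := by
    rw [← Real.exp_add]; simp
  nlinarith [Real.exp_pos (-x), Real.exp_pos x, sq_nonneg (Real.exp (-x))]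

lemma exp_neg_cosh_le (x : ℝ) (hx : 0 ≤ x) : Real.exp (-x) * Real.cosh x ≤ 1 := by
  rw [Real.cosh_eq]
  have h1 : Real.exp (-x) * Real.exp x = 1 := by rw [← Real.exp_add]; simp
  have h2 : Real.exp (-x) ≤ 1 := Real.exp_le_one_iff.mpr (by linarith)
  nlinarith [Real.exp_pos (-x)]

lemma hardy_Ioi (φ G : ℝ → ℝ) (hφm : AEStronglyMeasurable φ (volume : Measure ℝ))
    (hφ2 : IntegrableOn (fun t => φ t ^ 2) (Ioi 0) (volume : Measure ℝ))
    (hG : ∀ x, HasDerivAt G (Real.cosh x * φ x) x) (hG0 : G 0 = 0) :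
    ∫ x in Ioi (0:ℝ), (G x / Real.cosh x) ^ 2 ≤ 4 * ∫ t in Ioi (0:ℝ), φ t ^ 2 := by
  classical
  -- measurable representative
  set φ' : ℝ → ℝ := hφm.mk φ with hφ'def
  have hφ'meas : StronglyMeasurable φ' := hφm.stronglyMeasurable_mk
  have hφae : φ =ᵐ[volume] φ' := hφm.ae_eq_mk
  set ψ : ℝ → ℝ := fun t => Real.cosh t ^ 2 * φ' t ^ 2 * Real.exp (-t) with hψdef
  have hψmeas : Measurable ψ := by
    exact ((Real.continuous_cosh.measurable.pow_const 2).mul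
      ((hφ'meas.measurable).pow_const 2)).mul (Real.measurable_exp.comp measurable_neg)
  have hψnn : ∀ t, 0 ≤ ψ t := by
    intro t
    positivity
  have hGcont : Continuous G := by
    have : Differentiable ℝ G := fun x => (hG x).differentiableAt
    exact this.continuous
  -- integrability of φ, ψ on finite intervals
  have hφsq_Ioc : ∀ x : ℝ, 0 < x → IntegrableOn (fun t => φ t ^ 2) (Ioc 0 x) volume :=
    fun x hx => hφ2.mono_set Ioc_subset_Ioi_self
  have hψ_Ioc : ∀ x : ℝ, 0 < x → IntegrableOn ψ (Ioc 0 x) volume := by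
    intro x hx
    have h1 : IntegrableOn (fun t => φ' t ^ 2) (Ioc 0 x) volume :=
      (hφsq_Ioc x hx).congr_fun_ae (by filter_upwards [ae_restrict_of_ae hφae] with t ht; rw [ht])
    refine Integrable.mono ((h1.const_mul (Real.cosh x ^ 2))) hψmeas.aestronglyMeasurable.restrict ?_
    refine (ae_restrict_iff' measurableSet_Ioc).2 (ae_of_all _ fun t ht => ?_)
    have h2 : Real.cosh t ≤ Real.cosh x := by
      rw [Real.cosh_le_cosh]
      rw [abs_of_pos ht.1, abs_of_pos hx]; exact ht.2
    have h3 : Real.exp (-t) ≤ 1 := Real.exp_le_one_iff.mpr (by linarith [ht.1])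
    have h4 : (0:ℝ) < Real.cosh t := Real.cosh_pos t
    simp only [Real.norm_eq_abs, hψdef]
    rw [abs_of_nonneg (by positivity), abs_of_nonneg (by positivity)]
    have h5 : (0:ℝ) ≤ Real.cosh t ^ 2 * φ' t ^ 2 := by positivity
    have h6 : Real.cosh t ^ 2 * φ' t ^ 2 * Real.exp (-t) ≤ Real.cosh t ^ 2 * φ' t ^ 2 := by
      nlinarith [Real.exp_pos (-t)]
    have hcc : Real.cosh t ^ 2 ≤ Real.cosh x ^ 2 := by nlinarith
    have h7 : Real.cosh t ^ 2 * φ' t ^ 2 ≤ Real.cosh x ^ 2 * φ' t ^ 2 :=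
      mul_le_mul_of_nonneg_right hcc (sq_nonneg _)
    linarith
  -- FTC
  have hFTC : ∀ x : ℝ, 0 < x → G x = ∫ t in Ioc 0 x, Real.cosh t * φ t := by
    intro x hx
    have hφabs : IntegrableOn (fun t => |φ t|) (Ioc 0 x) volume := by
      have hdom : IntegrableOn (fun t => φ t ^ 2 + 1) (Ioc 0 x) volume :=
        (hφsq_Ioc x hx).add (integrable_const 1)
      refine Integrable.mono hdom (by simpa using hφm.norm.restrict) ?_
      refine ae_of_all _ fun t => ?_
      simp only [Real.norm_eq_abs, abs_abs]
      rw [abs_of_nonneg (by positivity : (0:ℝ) ≤ φ t ^ 2 + 1)]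
      nlinarith [sq_nonneg (|φ t| - 1), sq_abs (φ t)]
    have hint : IntegrableOn (fun t => Real.cosh t * φ t) (Ioc 0 x) volume := by
      refine Integrable.mono (hφabs.const_mul (Real.cosh x))
        ((Real.continuous_cosh.aestronglyMeasurable.mul hφm).restrict) ?_
      refine (ae_restrict_iff' measurableSet_Ioc).2 (ae_of_all _ fun t ht => ?_)
      have h2 : Real.cosh t ≤ Real.cosh x := by
        rw [Real.cosh_le_cosh, abs_of_pos ht.1, abs_of_pos hx]; exact ht.2
      have h4 : (0:ℝ) < Real.cosh t := Real.cosh_pos t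
      simp only [Real.norm_eq_abs, abs_mul, abs_of_pos h4, abs_abs,
        abs_of_pos (Real.cosh_pos x)]
      exact mul_le_mul_of_nonneg_right h2 (abs_nonneg _)
    have hII : IntervalIntegrable (fun t => Real.cosh t * φ t) volume 0 x :=
      (intervalIntegrable_iff_integrableOn_Ioc_of_le hx.le).2 hint
    have := intervalIntegral.integral_eq_sub_of_hasDerivAt (f := G)
      (fun t _ => hG t) hII
    rw [hG0, sub_zero] at this
    rw [← this, intervalIntegral.integral_of_le hx.le]
  have hφabs : AEStronglyMeasurable (fun t => |φ t|) (volume : Measure ℝ) := by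
    simpa using hφm.norm
  -- Cauchy–Schwarz pointwise bound
  have hCS : ∀ x : ℝ, 0 < x →
      (G x / Real.cosh x) ^ 2 ≤ 4 * Real.exp (-x) * ∫ t in Ioc 0 x, ψ t := by
    intro x hx
    set A : ℝ := ∫ t in Ioc 0 x, ψ t with hAdef
    set B : ℝ := ∫ t in Ioc 0 x, Real.exp t with hBdef
    have hA0 : 0 ≤ A := integral_nonneg hψnn
    have hB0 : 0 ≤ B := integral_nonneg fun t => (Real.exp_pos t).le
    set u : ℝ → ℝ := fun t => Real.cosh t * |φ t| * Real.exp (-(t/2)) with hudef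
    set v : ℝ → ℝ := fun t => Real.exp (t/2) with hvdef
    have hunn : ∀ t, 0 ≤ u t := fun t => by
      have := Real.cosh_pos t; positivity
    have hvnn : ∀ t, 0 ≤ v t := fun t => (Real.exp_pos _).le
    have h1 : ∀ t : ℝ, Real.exp (-(t/2)) * Real.exp (t/2) = 1 := by
      intro t; rw [← Real.exp_add]; simp
    have huv : ∀ t, |Real.cosh t * φ t| = u t * v t := by
      intro t
      have : u t * v t = Real.cosh t * |φ t| * (Real.exp (-(t/2)) * Real.exp (t/2)) := by
        rw [hudef, hvdef]; ring
      rw [abs_mul, abs_of_pos (Real.cosh_pos t), this, h1, mul_one]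
    have husq_eq : ∀ t : ℝ, φ t = φ' t → u t ^ 2 = ψ t := by
      intro t ht
      rw [hudef, hψdef]
      simp only
      rw [mul_pow, mul_pow, sq_abs, ht]
      congr 1
      rw [← Real.exp_nat_mul]
      congr 1
      ring
    have hvsq_eq : ∀ t : ℝ, v t ^ 2 = Real.exp t := by
      intro t
      rw [hvdef]
      simp only
      rw [← Real.exp_nat_mul]
      congr 1
      ring
    -- measurability / MemLp on the restricted measure
    have hexp1 : Continuous fun t : ℝ => Real.exp (-(t/2)) :=
      Real.continuous_exp.comp ((continuous_id.div_const 2).neg)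
    have hexp2 : Continuous fun t : ℝ => Real.exp (t/2) :=
      Real.continuous_exp.comp (continuous_id.div_const 2)
    have hum : AEStronglyMeasurable u (volume.restrict (Ioc 0 x)) :=
      ((Real.continuous_cosh.aestronglyMeasurable.mul hφabs).mul
        hexp1.aestronglyMeasurable).restrict
    have husq : IntegrableOn (fun t => u t ^ 2) (Ioc 0 x) volume := by
      refine (hψ_Ioc x hx).congr_fun_ae ?_
      filter_upwards [ae_restrict_of_ae hφae] with t ht
      exact (husq_eq t ht).symm
    have hu2 : MemLp u 2 (volume.restrict (Ioc 0 x)) :=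
      (memLp_two_iff_integrable_sq hum).2 husq
    have hvsq : IntegrableOn (fun t => v t ^ 2) (Ioc 0 x) volume :=
      (hexp2.pow 2).integrableOn_Ioc
    have hv2 : MemLp v 2 (volume.restrict (Ioc 0 x)) :=
      (memLp_two_iff_integrable_sq hexp2.aestronglyMeasurable.restrict).2 hvsq
    -- Hölder
    have hconj : Real.HolderConjugate 2 2 := Real.holderConjugate_iff.2 ⟨one_lt_two, by norm_num⟩
    have hofReal : ENNReal.ofReal (2:ℝ) = 2 := by norm_num
    have hHold := integral_mul_le_Lp_mul_Lq_of_nonneg (μ := volume.restrict (Ioc 0 x)) hconj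
      (ae_of_all _ hunn) (ae_of_all _ hvnn) (hofReal ▸ hu2) (hofReal ▸ hv2)
    have hintu : (∫ t in Ioc 0 x, u t ^ (2:ℝ)) = A := by
      rw [hAdef]
      refine integral_congr_ae ?_
      filter_upwards [ae_restrict_of_ae hφae] with t ht
      rw [show (2:ℝ) = ((2:ℕ):ℝ) by norm_num, Real.rpow_natCast]
      exact husq_eq t ht
    have hintv : (∫ t in Ioc 0 x, v t ^ (2:ℝ)) = B := by
      rw [hBdef]
      refine integral_congr_ae (ae_of_all _ fun t => ?_)
      show v t ^ (2:ℝ) = _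
      rw [show (2:ℝ) = ((2:ℕ):ℝ) by norm_num, Real.rpow_natCast]
      exact hvsq_eq t
    rw [hintu, hintv] at hHold
    have hGle : |G x| ≤ Real.sqrt A * Real.sqrt B := by
      rw [hFTC x hx, Real.sqrt_eq_rpow, Real.sqrt_eq_rpow]
      refine le_trans ?_ hHold
      rw [← Real.norm_eq_abs]
      refine (norm_integral_le_integral_norm _).trans_eq ?_
      exact integral_congr_ae (ae_of_all _ fun t => huv t)
    have hGsq : G x ^ 2 ≤ A * B := by
      have h2 := pow_le_pow_left₀ (abs_nonneg (G x)) hGle 2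
      rw [sq_abs, mul_pow, Real.sq_sqrt hA0, Real.sq_sqrt hB0] at h2
      exact h2
    have hBexp : B ≤ Real.exp x := by
      rw [hBdef, ← intervalIntegral.integral_of_le hx.le, integral_exp]
      nlinarith [Real.exp_pos (0:ℝ)]
    have hGB : G x ^ 2 ≤ A * Real.exp x :=
      hGsq.trans (mul_le_mul_of_nonneg_left hBexp hA0)
    have hcosh : (1/Real.cosh x)^2 ≤ (2*Real.exp (-x))^2 :=
      pow_le_pow_left₀ (by positivity) (one_div_cosh_le x) 2
    have hexpx : Real.exp x * (Real.exp (-x) * Real.exp (-x)) = Real.exp (-x) := by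
      rw [← Real.exp_add, ← Real.exp_add]; congr 1; ring
    calc (G x / Real.cosh x) ^ 2 = G x ^ 2 * (1/Real.cosh x)^2 := by
          rw [div_eq_mul_one_div, mul_pow]
      _ ≤ (A * Real.exp x) * (2*Real.exp (-x))^2 := by
          refine mul_le_mul hGB hcosh (by positivity) (by positivity)
      _ = 4 * (Real.exp x * (Real.exp (-x) * Real.exp (-x))) * A := by ring
      _ = 4 * Real.exp (-x) * A := by rw [hexpx]
  -- Tonelli bookkeeping
  have hofReal4 : ENNReal.ofReal (4:ℝ) = 4 := by norm_num
  set S : Set (ℝ × ℝ) := {p : ℝ × ℝ | 0 < p.2 ∧ p.2 ≤ p.1} with hSdef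
  have hSm : MeasurableSet S :=
    (measurableSet_lt measurable_const measurable_snd).inter
      (measurableSet_le measurable_snd measurable_fst)
  set k : ℝ → ℝ → ℝ≥0∞ := fun x t => S.indicator
    (fun p : ℝ × ℝ => ENNReal.ofReal (Real.exp (-p.1)) * ENNReal.ofReal (ψ p.2)) (x, t) with hkdef
  have hkm : Measurable (Function.uncurry k) := by
    have huncurry : Function.uncurry k = S.indicator
        (fun p : ℝ × ℝ => ENNReal.ofReal (Real.exp (-p.1)) * ENNReal.ofReal (ψ p.2)) := by
      ext p; cases p; rfl
    rw [huncurry]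
    exact Measurable.indicator
      (((Real.measurable_exp.comp measurable_fst.neg).ennreal_ofReal).mul
        ((hψmeas.comp measurable_snd).ennreal_ofReal)) hSm
  have eq1 : ∀ x : ℝ, (∫⁻ t, k x t)
      = ENNReal.ofReal (Real.exp (-x)) * ∫⁻ t in Ioc 0 x, ENNReal.ofReal (ψ t) := by
    intro x
    have hind : ∀ t, k x t = (Ioc (0:ℝ) x).indicator
        (fun t => ENNReal.ofReal (Real.exp (-x)) * ENNReal.ofReal (ψ t)) t := by
      intro t
      by_cases h : t ∈ Ioc (0:ℝ) x
      · rw [Set.indicator_of_mem h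
          (fun t => ENNReal.ofReal (Real.exp (-x)) * ENNReal.ofReal (ψ t)), hkdef]
        have hmemS : (x, t) ∈ S := ⟨h.1, h.2⟩
        exact Set.indicator_of_mem hmemS _
      · rw [Set.indicator_of_notMem h
          (fun t => ENNReal.ofReal (Real.exp (-x)) * ENNReal.ofReal (ψ t)), hkdef]
        have hmemS : (x, t) ∉ S := fun hc => h ⟨hc.1, hc.2⟩
        exact Set.indicator_of_notMem hmemS _
    simp_rw [hind]
    rw [lintegral_indicator measurableSet_Ioc, lintegral_const_mul _ hψmeas.ennreal_ofReal]
  have eq2 : ∀ t : ℝ, (∫⁻ x, k x t) = (Ioi (0:ℝ)).indicator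
      (fun t => ENNReal.ofReal (ψ t) * ENNReal.ofReal (Real.exp (-t))) t := by
    intro t
    by_cases ht : 0 < t
    · rw [Set.indicator_of_mem (mem_Ioi.mpr ht)
        (fun t => ENNReal.ofReal (ψ t) * ENNReal.ofReal (Real.exp (-t)))]
      have hind : ∀ x, k x t = (Ici t).indicator
          (fun x => ENNReal.ofReal (Real.exp (-x)) * ENNReal.ofReal (ψ t)) x := by
        intro x
        by_cases h : t ≤ x
        · rw [Set.indicator_of_mem (mem_Ici.mpr h)
            (fun x => ENNReal.ofReal (Real.exp (-x)) * ENNReal.ofReal (ψ t)), hkdef]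
          have hmemS : (x, t) ∈ S := ⟨ht, h⟩
          exact Set.indicator_of_mem hmemS _
        · rw [Set.indicator_of_notMem (fun hc => h (mem_Ici.mp hc))
            (fun x => ENNReal.ofReal (Real.exp (-x)) * ENNReal.ofReal (ψ t)), hkdef]
          have hmemS : (x, t) ∉ S := fun hc => h hc.2
          exact Set.indicator_of_notMem hmemS _
      simp_rw [hind]
      rw [lintegral_indicator measurableSet_Ici]
      have hexpint : ∫⁻ x in Ici t, ENNReal.ofReal (Real.exp (-x)) = ENNReal.ofReal (Real.exp (-t)) := by
        rw [setLIntegral_congr (Ioi_ae_eq_Ici (a := t)).symm]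
        rw [← ofReal_integral_eq_lintegral_ofReal
          (by have := exp_neg_integrableOn_Ioi t one_pos; simp only [neg_mul, one_mul] at this; exact this)
          (ae_of_all _ fun x => (Real.exp_pos (-x)).le)]
        rw [integral_exp_neg_Ioi]
      rw [lintegral_mul_const' _ _ ENNReal.ofReal_ne_top, hexpint, mul_comm]
    · rw [Set.indicator_of_notMem (fun hc => ht (mem_Ioi.mp hc))
        (fun t => ENNReal.ofReal (ψ t) * ENNReal.ofReal (Real.exp (-t)))]
      have hz : ∀ x, k x t = 0 := fun x => by
        rw [hkdef]
        have hmemS : (x, t) ∉ S := fun hc => ht hc.1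
        exact Set.indicator_of_notMem hmemS _
      simp_rw [hz]
      exact lintegral_zero
  -- the chain of lintegral inequalities
  have hQnn : 0 ≤ ∫ t in Ioi (0:ℝ), φ t ^ 2 := integral_nonneg fun t => sq_nonneg _
  have hchain : ∫⁻ x in Ioi (0:ℝ), ENNReal.ofReal ((G x / Real.cosh x) ^ 2)
      ≤ ENNReal.ofReal (4 * ∫ t in Ioi (0:ℝ), φ t ^ 2) := by
    calc ∫⁻ x in Ioi (0:ℝ), ENNReal.ofReal ((G x / Real.cosh x) ^ 2)
        ≤ ∫⁻ x in Ioi (0:ℝ), ENNReal.ofReal (4 * Real.exp (-x) * ∫ t in Ioc 0 x, ψ t) :=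
          setLIntegral_mono' measurableSet_Ioi fun x hx => ENNReal.ofReal_le_ofReal (hCS x hx)
      _ = ∫⁻ x in Ioi (0:ℝ), 4 * ∫⁻ t, k x t := by
          refine setLIntegral_congr_fun measurableSet_Ioi (fun x hx => ?_)
          rw [eq1 x, ENNReal.ofReal_mul (by positivity : (0:ℝ) ≤ 4 * Real.exp (-x)),
            ENNReal.ofReal_mul (by norm_num : (0:ℝ) ≤ 4),
            ofReal_integral_eq_lintegral_ofReal (hψ_Ioc x hx) (ae_of_all _ hψnn), hofReal4,
            mul_assoc]
      _ = 4 * ∫⁻ x in Ioi (0:ℝ), ∫⁻ t, k x t := lintegral_const_mul' 4 _ (by norm_num)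
      _ ≤ 4 * ∫⁻ x, ∫⁻ t, k x t := mul_le_mul_right (setLIntegral_le_lintegral _ _) 4
      _ = 4 * ∫⁻ t, ∫⁻ x, k x t := by rw [lintegral_lintegral_swap hkm.aemeasurable]
      _ = 4 * ∫⁻ t in Ioi (0:ℝ), ENNReal.ofReal (ψ t) * ENNReal.ofReal (Real.exp (-t)) := by
          simp_rw [eq2]
          rw [lintegral_indicator measurableSet_Ioi]
      _ ≤ 4 * ∫⁻ t in Ioi (0:ℝ), ENNReal.ofReal (φ' t ^ 2) := by
          refine mul_le_mul_right (setLIntegral_mono' measurableSet_Ioi fun t ht => ?_) 4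
          rw [← ENNReal.ofReal_mul (hψnn t)]
          refine ENNReal.ofReal_le_ofReal ?_
          have hce : Real.exp (-t) * Real.cosh t ≤ 1 := exp_neg_cosh_le t (le_of_lt ht)
          have hce0 : 0 ≤ Real.exp (-t) * Real.cosh t :=
            mul_nonneg (Real.exp_pos _).le (Real.cosh_pos t).le
          have h8 : (Real.cosh t * Real.exp (-t)) ^ 2 ≤ 1 := by nlinarith
          calc ψ t * Real.exp (-t) = φ' t ^ 2 * (Real.cosh t * Real.exp (-t)) ^ 2 := by
                rw [hψdef]; ring
            _ ≤ φ' t ^ 2 * 1 := mul_le_mul_of_nonneg_left h8 (sq_nonneg _)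
            _ = φ' t ^ 2 := mul_one _
      _ = 4 * ∫⁻ t in Ioi (0:ℝ), ENNReal.ofReal (φ t ^ 2) := by
          congr 1
          refine lintegral_congr_ae (ae_restrict_of_ae ?_)
          filter_upwards [hφae] with t ht
          rw [ht]
      _ = 4 * ENNReal.ofReal (∫ t in Ioi (0:ℝ), φ t ^ 2) := by
          rw [ofReal_integral_eq_lintegral_ofReal hφ2 (ae_of_all _ fun t => sq_nonneg _)]
      _ = ENNReal.ofReal (4 * ∫ t in Ioi (0:ℝ), φ t ^ 2) := by
          rw [ENNReal.ofReal_mul (by norm_num : (0:ℝ) ≤ 4), hofReal4]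
  -- conclude
  have hL : ∫ x in Ioi (0:ℝ), (G x / Real.cosh x) ^ 2
      = (∫⁻ x in Ioi (0:ℝ), ENNReal.ofReal ((G x / Real.cosh x) ^ 2)).toReal := by
    have hmeas : AEStronglyMeasurable (fun x : ℝ => (G x / Real.cosh x) ^ 2)
        (volume.restrict (Ioi 0)) := by
      apply Continuous.aestronglyMeasurable
      exact (hGcont.div Real.continuous_cosh fun x => (Real.cosh_pos x).ne').pow 2
    exact integral_eq_lintegral_of_nonneg_ae (ae_of_all _ fun x => sq_nonneg _) hmeas
  rw [hL]
  calc (∫⁻ x in Ioi (0:ℝ), ENNReal.ofReal ((G x / Real.cosh x) ^ 2)).toReal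
      ≤ (ENNReal.ofReal (4 * ∫ t in Ioi (0:ℝ), φ t ^ 2)).toReal :=
        ENNReal.toReal_mono ENNReal.ofReal_ne_top hchain
    _ = 4 * ∫ t in Ioi (0:ℝ), φ t ^ 2 := ENNReal.toReal_ofReal (by positivity)

/-- On `E = (ker L)^⊥`, the norm `‖(-L)^{1/2} f‖_{L²}` is equivalent to the `H¹` norm.
Since `-L = ℓ*ℓ` with `ℓ = ∂ₓ + tanh x`, one has `‖(-L)^{1/2} f‖² = ‖ℓf‖²`, and the
equivalence is stated for the squared norms. -/
theorem sqrtL_norm_equiv_H1 :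
    ∃ c₁ c₂ : ℝ, 0 < c₁ ∧ 0 < c₂ ∧
      ∀ f : ℝ → ℝ, Differentiable ℝ f →
        MemLp f 2 (volume : Measure ℝ) →
        MemLp (deriv f) 2 (volume : Measure ℝ) →
        (∫ x : ℝ, f x * (1 / Real.cosh x)) = 0 →
        c₁ * ((∫ x : ℝ, f x ^ 2) + (∫ x : ℝ, deriv f x ^ 2)) ≤
          (∫ x : ℝ, (deriv f x + Real.tanh x * f x) ^ 2) ∧
        (∫ x : ℝ, (deriv f x + Real.tanh x * f x) ^ 2) ≤
          c₂ * ((∫ x : ℝ, f x ^ 2) + (∫ x : ℝ, deriv f x ^ 2)) := by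
  refine ⟨1/14, 2, by norm_num, by norm_num, ?_⟩
  intro f hdiff hfL2 hdL2 horth
  set a : ℝ := f 0 with hadef
  set φ : ℝ → ℝ := fun x => deriv f x + Real.tanh x * f x with hφdef
  set G : ℝ → ℝ := fun x => Real.cosh x * f x - a with hGdef
  have hG0 : G 0 = 0 := by simp [hGdef, hadef]
  have hGderiv : ∀ x, HasDerivAt G (Real.cosh x * φ x) x := by
    intro x
    have h1 : HasDerivAt (fun y => Real.cosh y * f y)
        (Real.sinh x * f x + Real.cosh x * deriv f x) x :=
      (Real.hasDerivAt_cosh x).mul (hdiff x).hasDerivAt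
    have h2 := h1.sub_const a
    refine h2.congr_deriv ?_
    rw [hφdef]
    simp only
    rw [Real.tanh_eq_sinh_div_cosh]
    field_simp
    ring
  have hfcont : Continuous f := hdiff.continuous
  have htanhf : MemLp (fun x => Real.tanh x * f x) 2 (volume : Measure ℝ) := by
    refine hfL2.of_le (continuous_tanh'.mul hfcont).aestronglyMeasurable
      (ae_of_all _ fun x => ?_)
    rw [Real.norm_eq_abs, Real.norm_eq_abs, abs_mul]
    nlinarith [abs_tanh_le_one x, abs_nonneg (f x), abs_nonneg (Real.tanh x)]
  have hφL2 : MemLp φ 2 (volume : Measure ℝ) := hdL2.add htanhf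
  have hφm : AEStronglyMeasurable φ volume := hφL2.aestronglyMeasurable
  have hφsqint : Integrable (fun x => φ x ^ 2) volume := hφL2.integrable_sq
  have hfsqint : Integrable (fun x => f x ^ 2) volume := hfL2.integrable_sq
  have hdsqint : Integrable (fun x => deriv f x ^ 2) volume := hdL2.integrable_sq
  -- sech facts
  have hsech_cont : Continuous fun x : ℝ => 1 / Real.cosh x :=
    continuous_const.div Real.continuous_cosh fun x => (Real.cosh_pos x).ne'
  have hsechsq : Integrable (fun x => (1 / Real.cosh x) ^ 2) volume := by
    have hbound : ∀ x : ℝ, (1 / Real.cosh x) ^ 2 ≤ 4 * Real.exp (-2 * x) := by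
      intro x
      have h1 := one_div_cosh_le x
      have h2 : (0:ℝ) ≤ 1 / Real.cosh x := by positivity
      have h3 : Real.exp (-x) * Real.exp (-x) = Real.exp (-2 * x) := by
        rw [← Real.exp_add]; congr 1; ring
      nlinarith [Real.exp_pos (-x)]
    have hpos : IntegrableOn (fun x => (1 / Real.cosh x) ^ 2) (Ioi 0) volume := by
      refine Integrable.mono ((exp_neg_integrableOn_Ioi 0 two_pos).const_mul 4)
        (hsech_cont.pow 2).aestronglyMeasurable.restrict (ae_of_all _ fun x => ?_)
      rw [Real.norm_eq_abs, Real.norm_eq_abs, abs_of_nonneg (by positivity),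
        abs_of_nonneg (by positivity)]
      exact hbound x
    have hIic : IntegrableOn (fun x => (1 / Real.cosh x) ^ 2) (Iic 0) volume := by
      have hemb : MeasurableEmbedding (fun x : ℝ => -x) :=
        (Homeomorph.neg ℝ).isClosedEmbedding.measurableEmbedding
      rw [← (Measure.measurePreserving_neg (volume : Measure ℝ)).integrableOn_comp_preimage hemb]
      have hpre : (fun x : ℝ => -x) ⁻¹' (Iic 0) = Ici 0 := by
        ext y; simp
      rw [hpre]
      have heq : ((fun x => (1 / Real.cosh x) ^ 2) ∘ fun x : ℝ => -x)
          = fun x => (1 / Real.cosh x) ^ 2 := by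
        funext y; simp [Real.cosh_neg]
      rw [heq, integrableOn_Ici_iff_integrableOn_Ioi]
      exact hpos
    have := integrableOn_union.2 ⟨hIic, hpos⟩
    rw [Iic_union_Ioi, integrableOn_univ] at this
    exact this
  have hsechL2 : MemLp (fun x => 1 / Real.cosh x) 2 (volume : Measure ℝ) :=
    (memLp_two_iff_integrable_sq hsech_cont.aestronglyMeasurable).2 hsechsq
  have hgsqint : Integrable (fun x => (f x - a * (1 / Real.cosh x)) ^ 2) volume := by
    have := (hfL2.sub (hsechL2.const_mul a)).integrable_sq
    simpa [Pi.sub_apply] using this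
  have hfs_int : Integrable (fun x => f x * (1 / Real.cosh x)) volume := by
    refine Integrable.mono (hfsqint.add hsechsq)
      (hfcont.mul hsech_cont).aestronglyMeasurable (ae_of_all _ fun x => ?_)
    simp only [Pi.add_apply]
    rw [Real.norm_eq_abs, Real.norm_eq_abs, abs_mul,
      abs_of_nonneg (by positivity : (0:ℝ) ≤ f x ^ 2 + (1 / Real.cosh x) ^ 2),
      abs_of_nonneg (by positivity : (0:ℝ) ≤ 1 / Real.cosh x)]
    nlinarith [sq_nonneg (|f x| - 1 / Real.cosh x), sq_abs (f x),
      abs_nonneg (f x), (by positivity : (0:ℝ) ≤ 1 / Real.cosh x)]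
  -- expansion of the completed square
  have hptg : (fun x => (f x - a * (1 / Real.cosh x)) ^ 2)
      = fun x => f x ^ 2 - (2 * a) * (f x * (1 / Real.cosh x))
          + a ^ 2 * ((1 / Real.cosh x) ^ 2) := funext fun x => by ring
  have hexp : ∫ x, (f x - a * (1 / Real.cosh x)) ^ 2
      = (∫ x, f x ^ 2) - (2 * a) * (∫ x, f x * (1 / Real.cosh x))
        + a ^ 2 * ∫ x, (1 / Real.cosh x) ^ 2 := by
    have hsub : Integrable (fun x => f x ^ 2 - (2 * a) * (f x * (1 / Real.cosh x))) volume := by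
      exact hfsqint.sub (hfs_int.const_mul (2 * a))
    rw [hptg, integral_add hsub (hsechsq.const_mul (a ^ 2)),
      integral_sub hfsqint (hfs_int.const_mul (2 * a)),
      integral_const_mul, integral_const_mul]
  have hS_le_g : (∫ x, f x ^ 2) ≤ ∫ x, (f x - a * (1 / Real.cosh x)) ^ 2 := by
    rw [hexp, horth]
    have h0 : 0 ≤ a ^ 2 * ∫ x, (1 / Real.cosh x) ^ 2 :=
      mul_nonneg (sq_nonneg a) (integral_nonneg fun x => sq_nonneg _)
    linarith
  -- Hardy inequality on both half-lines
  have hg_eq : ∀ x, G x / Real.cosh x = f x - a * (1 / Real.cosh x) := by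
    intro x
    rw [hGdef]
    field_simp
  have hpos := hardy_Ioi φ G hφm hφsqint.integrableOn hGderiv hG0
  have hposL : ∫ x in Ioi (0:ℝ), (G x / Real.cosh x) ^ 2
      = ∫ x in Ioi (0:ℝ), (f x - a * (1 / Real.cosh x)) ^ 2 :=
    integral_congr_ae (ae_of_all _ fun x => by
      show (G x / Real.cosh x) ^ 2 = (f x - a * (1 / Real.cosh x)) ^ 2
      rw [hg_eq x])
  -- reflected versions
  set φn : ℝ → ℝ := fun t => -φ (-t) with hφndef
  set Gn : ℝ → ℝ := fun x => G (-x) with hGndef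
  have hGn0 : Gn 0 = 0 := by
    rw [hGndef]; simp only [neg_zero]; exact hG0
  have hφnm : AEStronglyMeasurable φn volume :=
    (hφm.comp_measurePreserving (Measure.measurePreserving_neg volume)).neg
  have hφnint : IntegrableOn (fun t => φn t ^ 2) (Ioi 0) volume := by
    have hcomp : Integrable ((fun x => φ x ^ 2) ∘ fun x : ℝ => -x) volume :=
      ((Measure.measurePreserving_neg (volume : Measure ℝ)).integrable_comp
        hφsqint.aestronglyMeasurable).2 hφsqint
    have heq : (fun t => φn t ^ 2) = ((fun x => φ x ^ 2) ∘ fun x : ℝ => -x) := by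
      funext t; simp [hφndef]
    rw [heq]
    exact hcomp.integrableOn
  have hGnderiv : ∀ x, HasDerivAt Gn (Real.cosh x * φn x) x := by
    intro x
    have h1 := (hGderiv (-x)).comp x (hasDerivAt_neg x)
    refine h1.congr_deriv ?_
    rw [Real.cosh_neg, hφndef]
    simp only
    ring
  have hneg := hardy_Ioi φn Gn hφnm hφnint hGnderiv hGn0
  have hnegL : ∫ x in Ioi (0:ℝ), (Gn x / Real.cosh x) ^ 2
      = ∫ x in Iic (0:ℝ), (f x - a * (1 / Real.cosh x)) ^ 2 := by
    have h1 : ∀ x : ℝ, (Gn x / Real.cosh x) ^ 2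
        = (fun y => (f y - a * (1 / Real.cosh y)) ^ 2) (-x) := by
      intro x
      rw [hGndef]
      simp only
      rw [← Real.cosh_neg x, hg_eq (-x)]
    calc ∫ x in Ioi (0:ℝ), (Gn x / Real.cosh x) ^ 2
        = ∫ x in Ioi (0:ℝ), (fun y => (f y - a * (1 / Real.cosh y)) ^ 2) (-x) :=
          integral_congr_ae (ae_of_all _ fun x => h1 x)
      _ = ∫ x in Iic (-(0:ℝ)), (f x - a * (1 / Real.cosh x)) ^ 2 := by
          exact integral_comp_neg_Ioi 0 (fun y => (f y - a * (1 / Real.cosh y)) ^ 2)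
      _ = ∫ x in Iic (0:ℝ), (f x - a * (1 / Real.cosh x)) ^ 2 := by rw [neg_zero]
  have hnegR : ∫ t in Ioi (0:ℝ), φn t ^ 2 = ∫ t in Iic (0:ℝ), φ t ^ 2 := by
    have h1 : ∀ t : ℝ, φn t ^ 2 = (fun y => φ y ^ 2) (-t) := by
      intro t; rw [hφndef]; simp only; rw [neg_sq]
    calc ∫ t in Ioi (0:ℝ), φn t ^ 2
        = ∫ t in Ioi (0:ℝ), (fun y => φ y ^ 2) (-t) :=
          integral_congr_ae (ae_of_all _ fun t => h1 t)
      _ = ∫ t in Iic (-(0:ℝ)), φ t ^ 2 := by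
          exact integral_comp_neg_Ioi 0 (fun y => φ y ^ 2)
      _ = ∫ t in Iic (0:ℝ), φ t ^ 2 := by rw [neg_zero]
  -- combine the two halves
  have hg_split : (∫ x in Iic (0:ℝ), (f x - a * (1 / Real.cosh x)) ^ 2)
      + (∫ x in Ioi (0:ℝ), (f x - a * (1 / Real.cosh x)) ^ 2)
      = ∫ x, (f x - a * (1 / Real.cosh x)) ^ 2 :=
    intervalIntegral.integral_Iic_add_Ioi hgsqint.integrableOn hgsqint.integrableOn
  have hφ_split : (∫ x in Iic (0:ℝ), φ x ^ 2) + (∫ x in Ioi (0:ℝ), φ x ^ 2)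
      = ∫ x, φ x ^ 2 :=
    intervalIntegral.integral_Iic_add_Ioi hφsqint.integrableOn hφsqint.integrableOn
  have hg4Q : ∫ x, (f x - a * (1 / Real.cosh x)) ^ 2 ≤ 4 * ∫ x, φ x ^ 2 := by
    rw [← hg_split, ← hφ_split]
    rw [hposL] at hpos
    rw [hnegL, hnegR] at hneg
    linarith
  have hS4Q : (∫ x, f x ^ 2) ≤ 4 * ∫ x, φ x ^ 2 := le_trans hS_le_g hg4Q
  -- derivative bound
  have htanh_sq : ∀ x : ℝ, Real.tanh x ^ 2 ≤ 1 := by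
    intro x
    nlinarith [abs_tanh_le_one x, sq_abs (Real.tanh x), abs_nonneg (Real.tanh x)]
  have hD2 : ∫ x, deriv f x ^ 2 ≤ 2 * (∫ x, φ x ^ 2) + 2 * (∫ x, f x ^ 2) := by
    have hpt : ∀ x, deriv f x ^ 2 ≤ 2 * φ x ^ 2 + 2 * f x ^ 2 := by
      intro x
      rw [hφdef]
      simp only
      have h1 : Real.tanh x ^ 2 * f x ^ 2 ≤ 1 * f x ^ 2 :=
        mul_le_mul_of_nonneg_right (htanh_sq x) (sq_nonneg _)
      nlinarith [sq_nonneg (deriv f x + 2 * (Real.tanh x * f x))]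
    have hint2 : Integrable (fun x => 2 * φ x ^ 2 + 2 * f x ^ 2) volume := by
      exact (hφsqint.const_mul 2).add (hfsqint.const_mul 2)
    have := integral_mono hdsqint hint2 hpt
    rwa [integral_add (hφsqint.const_mul 2) (hfsqint.const_mul 2),
      integral_const_mul, integral_const_mul] at this
  have hQ2 : ∫ x, φ x ^ 2 ≤ 2 * (∫ x, deriv f x ^ 2) + 2 * (∫ x, f x ^ 2) := by
    have hpt : ∀ x, φ x ^ 2 ≤ 2 * deriv f x ^ 2 + 2 * f x ^ 2 := by
      intro x
      rw [hφdef]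
      simp only
      have h1 : Real.tanh x ^ 2 * f x ^ 2 ≤ 1 * f x ^ 2 :=
        mul_le_mul_of_nonneg_right (htanh_sq x) (sq_nonneg _)
      nlinarith [sq_nonneg (deriv f x - Real.tanh x * f x)]
    have hint2 : Integrable (fun x => 2 * deriv f x ^ 2 + 2 * f x ^ 2) volume := by
      exact (hdsqint.const_mul 2).add (hfsqint.const_mul 2)
    have := integral_mono hφsqint hint2 hpt
    rwa [integral_add (hdsqint.const_mul 2) (hfsqint.const_mul 2),
      integral_const_mul, integral_const_mul] at this
  have hSnn : 0 ≤ ∫ x, f x ^ 2 := integral_nonneg fun x => sq_nonneg _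
  have hQeq : (∫ x : ℝ, (deriv f x + Real.tanh x * f x) ^ 2) = ∫ x, φ x ^ 2 := rfl
  constructor
  · rw [hQeq]
    linarith
  · rw [hQeq]
    linarith
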